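/- Let K be a commutative semiring and let (A, T, d) be a deterministic tree tensor network over K representing f^1,…,f^s : {0,1}^n → K (s = d(root)). Then there exists a deterministic s-output structured-decomposable (+,×)-circuit over K, structured by the vtree (T, λ) given by the leaf labeling of T, whose k-th output computes f^k for every k ∈ [s]; moreover, for every node v of T the circuit has exactly d(v) +-gates g^1_v,…,g^{d(v)}_v mapped to v and g^k_v computes exactly Â(v)[·,k]. -/

import Mathlib

/-! ## Tensor trains -/

/-- `ttSuffix n χ A α k s` is the `(s,0)` entry of the matrix product
`M_{n-k}(α (n-k)) ⋯ M_{n-1}(α (n-1))` of the last `k` matrices of the tensor train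
(0-indexed variables `0,…,n-1`, bond dimensions `χ 0, …, χ n`). -/
def ttSuffix {K : Type} [CommSemiring K] (n : ℕ) (χ : ℕ → ℕ)
    (A : ℕ → ℕ → ℕ → Bool → K) (α : ℕ → Bool) : ℕ → ℕ → K
  | 0, s => if s = 0 then 1 else 0
  | k + 1, s =>
      ∑ t ∈ Finset.range (χ (n - k)),
        A (n - (k + 1)) s t (α (n - (k + 1))) * ttSuffix n χ A α k t

/-- The pseudo-Boolean function represented by a tensor train: the unique entry of
`M_0(α 0) ⋯ M_{n-1}(α (n-1))`. -/
def ttFun {K : Type} [CommSemiring K] (n : ℕ) (χ : ℕ → ℕ)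
    (A : ℕ → ℕ → ℕ → Bool → K) (α : ℕ → Bool) : K :=
  ttSuffix n χ A α n 0

/-! ## Nondeterministic edge-valued decision diagrams -/

/-- An ordered nondeterministic edge-valued decision diagram over `K` on the (0-indexed)
variables `x_0 ≺ ⋯ ≺ x_{n-1}`.  Nodes carry a `level`: a node of level `r < n` is labeled with
the variable `x_r`; the sink is the unique node of level `n` and is unlabeled.  Levels strictly
increase along edges (so the diagram is an ordered, read-once DAG), the source is the unique
node without incoming edges and the sink the unique node without outgoing edges.  Each edge
carries a Boolean label and a weight in `K`. -/
structure NdEVDD (K : Type) (n : ℕ) where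
  V : Type
  [fintypeV : Fintype V]
  [decEqV : DecidableEq V]
  source : V
  sink : V
  level : V → ℕ
  edge : V → Bool → V → Bool
  w : V → Bool → V → K
  sink_level : level sink = n
  nonsink_level : ∀ v, v ≠ sink → level v < n
  edge_level : ∀ u b v, edge u b v = true → level u < level v
  source_no_in : ∀ u b, edge u b source = false
  sink_no_out : ∀ b v, edge sink b v = false
  single_source : ∀ v, v ≠ source → ∃ u b, edge u b v = true
  single_sink : ∀ v, v ≠ sink → ∃ b u, edge v b u = true

attribute [instance] NdEVDD.fintypeV NdEVDD.decEqV

namespace NdEVDD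

variable {K : Type} {n : ℕ}

/-- `D.IsPathFrom α v p`: `p` is a path from `v` to the sink that leaves every node labeled
`x_i` along an edge labeled `α i`. -/
def IsPathFrom (D : NdEVDD K n) (α : ℕ → Bool) : D.V → List (Bool × D.V) → Prop
  | v, [] => v = D.sink
  | v, (b, u) :: p => D.edge v b u = true ∧ b = α (D.level v) ∧ IsPathFrom D α u p

/-- The product of the weights of the edges of a path. -/
def pathWeight [CommSemiring K] (D : NdEVDD K n) : D.V → List (Bool × D.V) → K
  | _, [] => 1
  | v, (b, u) :: p => D.w v b u * pathWeight D u p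

/-- The function represented by the node `v` of the diagram: the sum, over all paths from `v`
to the sink consistent with the assignment `α`, of the product of the edge weights
(`0` if there is no such path). -/
noncomputable def nodeFun [CommSemiring K] (D : NdEVDD K n) (α : ℕ → Bool) (v : D.V) : K :=
  ∑ᶠ (p : List (Bool × D.V)) (_ : D.IsPathFrom α v p), D.pathWeight v p

/-- The function represented by the diagram: the path-sum from the source. -/
noncomputable def eval [CommSemiring K] (D : NdEVDD K n) (α : ℕ → Bool) : K :=
  D.nodeFun α D.source

/-- A diagram is complete when every source-to-sink path reads every variable; with levels
this means the source is at level `0` and every edge advances the level by exactly one. -/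
def Complete (D : NdEVDD K n) : Prop :=
  D.level D.source = 0 ∧ ∀ u b v, D.edge u b v = true → D.level v = D.level u + 1

/-- A diagram is deterministic when every node has at most one outgoing `0`-edge and at most
one outgoing `1`-edge. -/
def Deterministic (D : NdEVDD K n) : Prop :=
  ∀ u b v₁ v₂, D.edge u b v₁ = true → D.edge u b v₂ = true → v₁ = v₂

/-- The number of edges of the diagram. -/
def edgeCount (D : NdEVDD K n) : ℕ :=
  (Finset.univ.filter fun t : D.V × Bool × D.V => D.edge t.1 t.2.1 t.2.2 = true).card

end NdEVDD
/-! ## Vtrees -/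

/-- A vtree: a rooted binary tree whose leaves are labeled with (distinct) variables. -/
inductive VTree : Type
  | leaf (x : ℕ)
  | node (l r : VTree)

namespace VTree

/-- The set of variables on the leaves of a vtree. -/
def vars : VTree → Set ℕ
  | .leaf x => {x}
  | .node l r => l.vars ∪ r.vars

/-- The list of leaf labels, read from left to right. -/
def leaves : VTree → List ℕ
  | .leaf x => [x]
  | .node l r => l.leaves ++ r.leaves

/-- `s.Subtree t` : `s` is a (not necessarily proper) subtree of `t`. -/
def Subtree (s : VTree) : VTree → Prop
  | .leaf x => s = .leaf x
  | .node l r => s = .node l r ∨ s.Subtree l ∨ s.Subtree r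

end VTree

/-! ## (+,×)-circuits -/

/-- The kind of a circuit gate: an input `1[x = b]`, a `+` gate, or a `×` gate. -/
inductive GateKind : Type
  | input (x : ℕ) (b : Bool)
  | plus
  | times
deriving DecidableEq

/-- A `(+,×)`-circuit over a (commutative) semiring `K`: a finite DAG (acyclicity is witnessed
by a rank function decreasing from a gate to its children) whose sources are labeled with
indicator inputs `1[x = b]`, whose internal gates are `+` or `×` gates, and where each edge
from a child into a `+` gate carries a weight (recorded by `weight g g'` for the edge from
`g'` into `g`). -/
structure Circuit (K : Type) where
  Gate : Type
  [fintypeGate : Fintype Gate]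
  [decEqGate : DecidableEq Gate]
  kind : Gate → GateKind
  child : Gate → Gate → Bool
  weight : Gate → Gate → K
  rank : Gate → ℕ
  child_rank : ∀ g g', child g g' = true → rank g' < rank g
  input_no_child : ∀ g x b, kind g = .input x b → ∀ g', child g g' = false

attribute [instance] Circuit.fintypeGate Circuit.decEqGate

namespace Circuit

variable {K : Type}

/-- The value computed by gate `g` on the assignment `α` : inputs `1[x = b]` evaluate to `1`
iff `α x = b`, a `+` gate computes the weighted sum of its children, and a `×` gate computes
the product of its children. -/
def eval [CommSemiring K] (C : Circuit K) (α : ℕ → Bool) (g : C.Gate) : K :=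
  match C.kind g with
  | GateKind.input x b => if α x = b then 1 else 0
  | GateKind.plus =>
      ∑ g' : C.Gate, if h : C.child g g' = true then C.weight g g' * C.eval α g' else 0
  | GateKind.times =>
      ∏ g' : C.Gate, if h : C.child g g' = true then C.eval α g' else 1
termination_by C.rank g
decreasing_by
  all_goals exact C.child_rank g g' h

/-- Reachability along child edges. -/
def Reaches (C : Circuit K) : C.Gate → C.Gate → Prop :=
  Relation.ReflTransGen fun a b => C.child a b = true

/-- `var(g)`: the set of variables appearing on inputs below `g`. -/
def varsBelow (C : Circuit K) (g : C.Gate) : Set ℕ :=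
  {x | ∃ g' b, C.Reaches g g' ∧ C.kind g' = GateKind.input x b}

/-- A structuring of the circuit `C` by the vtree `T`: a map `φ` from gates to (subtrees of)
`T` such that `var(g) ⊆ var(φ g)`, every `×` gate has exactly two children mapped into the
left and right subtrees of `φ g` respectively, and every `+` gate has its children mapped to
`φ g` or its descendants.  A circuit admitting such a structuring is
structured-decomposable. -/
structure StructuredBy (C : Circuit K) (T : VTree) where
  φ : C.Gate → VTree
  φ_subtree : ∀ g, (φ g).Subtree T
  φ_vars : ∀ g, C.varsBelow g ⊆ (φ g).vars
  plus_structured : ∀ g g', C.kind g = GateKind.plus → C.child g g' = true →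
    (φ g').Subtree (φ g)
  times_structured : ∀ g, C.kind g = GateKind.times →
    ∃ l r gl gr, φ g = VTree.node l r ∧ gl ≠ gr ∧
      (∀ g', C.child g g' = true ↔ (g' = gl ∨ g' = gr)) ∧
      (φ gl).Subtree l ∧ (φ gr).Subtree r

/-- A circuit is deterministic when for every `+` gate and every two distinct children the
product of the corresponding weighted summands is the zero function. -/
def Deterministic [CommSemiring K] (C : Circuit K) : Prop :=
  ∀ g g₁ g₂, C.kind g = GateKind.plus → C.child g g₁ = true → C.child g g₂ = true →
    g₁ ≠ g₂ → ∀ α, (C.weight g g₁ * C.eval α g₁) * (C.weight g g₂ * C.eval α g₂) = 0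

/-- A structured-decomposable circuit is a decision circuit when every `+` gate has the form
`g₀·1[x = 0] + g₁·1[x = 1]` for some variable `x`: its children are exactly two `×` gates,
one having the input `1[x = 0]` as one of its two children and the other having the input
`1[x = 1]` as one of its two children. -/
def Decision (C : Circuit K) : Prop :=
  ∀ g, C.kind g = GateKind.plus →
    ∃ x m₀ m₁ g₀ g₁ i₀ i₁,
      m₀ ≠ m₁ ∧
      (∀ g', C.child g g' = true ↔ (g' = m₀ ∨ g' = m₁)) ∧
      C.kind m₀ = GateKind.times ∧ C.kind m₁ = GateKind.times ∧
      C.kind i₀ = GateKind.input x false ∧ C.kind i₁ = GateKind.input x true ∧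
      g₀ ≠ i₀ ∧ g₁ ≠ i₁ ∧
      (∀ c, C.child m₀ c = true ↔ (c = g₀ ∨ c = i₀)) ∧
      (∀ c, C.child m₁ c = true ↔ (c = g₁ ∨ c = i₁))

end Circuit

/-! ## Tree tensor networks -/

/-- A (binary) tree tensor network over `K`, indexed by the dimension `d` of its root:
a leaf labeled with the variable `x` carries a `2 × d` tensor, and an internal node with
children of dimensions `dl` and `dr` carries a `dl × dr × d` tensor. -/
inductive TTN (K : Type) : ℕ → Type
  | leaf (x : ℕ) {d : ℕ} (A : Bool → Fin d → K) : TTN K d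
  | node {dl dr d : ℕ} (l : TTN K dl) (r : TTN K dr)
      (A : Fin dl → Fin dr → Fin d → K) : TTN K d

namespace TTN

variable {K : Type}

/-- The `d` pseudo-Boolean functions `Â(v)[·,k]` represented by a TTN, evaluated on a (total)
assignment `α` of the Boolean variables. -/
def eval [CommSemiring K] : ∀ {d : ℕ}, TTN K d → (ℕ → Bool) → Fin d → K
  | _, .leaf x A, α, k => A (α x) k
  | _, @TTN.node _ dl dr _ l r A, α, k =>
      ∑ i : Fin dl, ∑ j : Fin dr, A i j k * (eval l α i * eval r α j)

/-- The underlying vtree (tree shape with leaf labels) of a TTN. -/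
def shape : ∀ {d : ℕ}, TTN K d → VTree
  | _, .leaf x _ => VTree.leaf x
  | _, .node l r _ => VTree.node l.shape r.shape

/-- `TTN.Sub u t` : the node `u` is a (not necessarily proper) subtree of the TTN `t`. -/
inductive Sub : ∀ {d₁ d₂ : ℕ}, TTN K d₁ → TTN K d₂ → Prop
  | refl {d} (t : TTN K d) : Sub t t
  | left {d₀ dl dr d} (s : TTN K d₀) (l : TTN K dl) (r : TTN K dr)
      (A : Fin dl → Fin dr → Fin d → K) : Sub s l → Sub s (TTN.node l r A)
  | right {d₀ dl dr d} (s : TTN K d₀) (l : TTN K dl) (r : TTN K dr)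
      (A : Fin dl → Fin dr → Fin d → K) : Sub s r → Sub s (TTN.node l r A)

/-- A TTN is deterministic when at every internal node `v`, for every `k` and every two
distinct nonzero entries `A(v)[i₁,j₁,k]`, `A(v)[i₂,j₂,k]`, the entrywise product of the
`i₁`-th and `i₂`-th represented functions of the left child vanishes, or that of the
`j₁`-th and `j₂`-th represented functions of the right child vanishes. -/
def Deterministic [CommSemiring K] : ∀ {d : ℕ}, TTN K d → Prop
  | _, .leaf _ _ => True
  | _, @TTN.node _ dl dr d l r A =>
      Deterministic l ∧ Deterministic r ∧
      ∀ (k : Fin d) (i₁ i₂ : Fin dl) (j₁ j₂ : Fin dr),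
        (i₁, j₁) ≠ (i₂, j₂) → A i₁ j₁ k ≠ 0 → A i₂ j₂ k ≠ 0 →
        (∀ α, eval l α i₁ * eval l α i₂ = 0) ∨ (∀ α, eval r α j₁ * eval r α j₂ = 0)

/-- The local condition of a decision TTN at an internal node with children `l`, `r` and
tensor `A` (following the case distinction on which children are leaves). -/
def DecisionNodeCond [CommSemiring K] :
    ∀ {dl dr d : ℕ}, TTN K dl → TTN K dr → (Fin dl → Fin dr → Fin d → K) → Prop
  | _, _, _, .leaf _ _, .leaf _ _, _ => True
  | _, _, _, .node _ _ _, .node _ _ _, A =>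
      ∀ k i₁ j₁ i₂ j₂, A i₁ j₁ k ≠ 0 → A i₂ j₂ k ≠ 0 → (i₁, j₁) = (i₂, j₂)
  | _, _, _, .node _ _ _, .leaf _ Ar, A =>
      ∀ k, ∃ j₀ k₀ j₁ k₁, ∀ i j, A i j k ≠ 0 →
        ((i, j) = (j₀, k₀) ∧ Ar true k₀ = 0) ∨ ((i, j) = (j₁, k₁) ∧ Ar false k₁ = 0)
  | _, _, _, .leaf _ Al, .node _ _ _, A =>
      ∀ k, ∃ j₀ k₀ j₁ k₁, ∀ i j, A i j k ≠ 0 →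
        ((i, j) = (k₀, j₀) ∧ Al true k₀ = 0) ∨ ((i, j) = (k₁, j₁) ∧ Al false k₁ = 0)

/-- A decision TTN: at every leaf each column of the tensor has a zero in the `x = 0` row or
in the `x = 1` row; at every internal node both of whose children are internal every slice
`A(v)[·,·,k]` has at most one nonzero entry; and at every internal node with exactly one leaf
child every slice has at most two nonzero entries whose leaf-side columns vanish at `x = 1`
and at `x = 0` respectively. -/
def Decision [CommSemiring K] : ∀ {d : ℕ}, TTN K d → Prop
  | _, .leaf _ A => ∀ i, A false i = 0 ∨ A true i = 0
  | _, .node l r A => Decision l ∧ Decision r ∧ DecisionNodeCond l r A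

end TTN


/-! The circuit is built bottom-up along the TTN. A leaf `x` with tensor `A` becomes `d` `+` gates
`∑_b A[b,k] · 1[x = b]`; an internal node `v` puts, on top of the disjoint union of the circuits
of its children, one `×` gate `g^i_{v_ℓ} · g^j_{v_r}` per pair `(i, j)` and `d(v)` `+` gates
`∑_{i,j} A(v)[i,j,k] · (i, j)`. Determinism of the TTN at `v` is exactly determinism of these new
`+` gates, and since the leaf labels are distinct, the `+` gates mapped to a vtree node are
exactly those created at that node. -/

namespace VTree

theorem Subtree.refl : ∀ t : VTree, t.Subtree t
  | .leaf _ => rfl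
  | .node _ _ => Or.inl rfl

theorem Subtree.leaves_sublist {s t : VTree} (h : s.Subtree t) : s.leaves.Sublist t.leaves := by
  induction t with
  | leaf _ => subst h; exact List.Sublist.refl _
  | node l r ihl ihr =>
    rcases h with rfl | h | h
    · exact List.Sublist.refl _
    · exact (ihl h).trans (List.sublist_append_left _ _)
    · exact (ihr h).trans (List.sublist_append_right _ _)

theorem Subtree.vars_subset {s t : VTree} (h : s.Subtree t) : s.vars ⊆ t.vars := by
  induction t with
  | leaf _ => subst h; exact subset_rfl
  | node l r ihl ihr =>
    rcases h with rfl | h | h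
    · exact subset_rfl
    · exact (ihl h).trans Set.subset_union_left
    · exact (ihr h).trans Set.subset_union_right

theorem leaves_ne_nil : ∀ t : VTree, t.leaves ≠ []
  | .leaf _ => List.cons_ne_nil _ _
  | .node l _ => fun h => leaves_ne_nil l (List.append_eq_nil_iff.1 h).1

theorem Subtree.not_disjoint_leaves {s t₁ t₂ : VTree} (h₁ : s.Subtree t₁) (h₂ : s.Subtree t₂) :
    ¬ t₁.leaves.Disjoint t₂.leaves := by
  obtain ⟨x, hx⟩ := List.exists_mem_of_ne_nil _ (leaves_ne_nil s)
  exact fun h => h (h₁.leaves_sublist.subset hx) (h₂.leaves_sublist.subset hx)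

theorem not_node_subtree_left (l r : VTree) : ¬ (node l r).Subtree l := fun h => by
  have := h.leaves_sublist.length_le
  have := List.length_pos_iff.2 (leaves_ne_nil r)
  simp only [leaves, List.length_append] at *
  omega

theorem not_node_subtree_right (l r : VTree) : ¬ (node l r).Subtree r := fun h => by
  have := h.leaves_sublist.length_le
  have := List.length_pos_iff.2 (leaves_ne_nil l)
  simp only [leaves, List.length_append] at *
  omega

end VTree

theorem TTN.Sub.shape_subtree {K : Type} {d₁ d₂ : ℕ} {u : TTN K d₁} {t : TTN K d₂}
    (h : u.Sub t) : u.shape.Subtree t.shape := by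
  induction h with
  | refl t => exact VTree.Subtree.refl _
  | left _ _ _ _ _ ih => exact Or.inr (Or.inl ih)
  | right _ _ _ _ _ ih => exact Or.inr (Or.inr ih)

namespace Circuit

variable {K : Type}

section Eval

variable [CommSemiring K] (C : Circuit K) (α : ℕ → Bool) (g : C.Gate)

theorem eval_input {x : ℕ} {b : Bool} (h : C.kind g = .input x b) :
    C.eval α g = if α x = b then 1 else 0 := by
  rw [eval, h]

theorem eval_plus (h : C.kind g = .plus) :
    C.eval α g = ∑ g', if C.child g g' = true then C.weight g g' * C.eval α g' else 0 := by
  rw [eval, h]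
  exact Finset.sum_congr rfl fun g' _ => by split_ifs <;> rfl

theorem eval_times (h : C.kind g = .times) :
    C.eval α g = ∏ g', if C.child g g' = true then C.eval α g' else 1 := by
  rw [eval, h]
  exact Finset.prod_congr rfl fun g' _ => by split_ifs <;> rfl

theorem eval_plus_of_child_iff {ι : Type} [Fintype ι] (h : C.kind g = .plus) {f : ι → C.Gate}
    (hf : Function.Injective f) (hchild : ∀ g', C.child g g' = true ↔ g' ∈ Set.range f) :
    C.eval α g = ∑ i, C.weight g (f i) * C.eval α (f i) := by
  rw [eval_plus C α g h]
  refine (Fintype.sum_of_injective f hf _ _ (fun g' hg' => ?_) fun i => ?_).symm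
  · rw [if_neg (mt (hchild g').1 hg')]
  · rw [if_pos ((hchild (f i)).2 ⟨i, rfl⟩)]

theorem eval_times_of_child_iff (h : C.kind g = .times) {a b : C.Gate} (hab : a ≠ b)
    (hchild : ∀ g', C.child g g' = true ↔ g' = a ∨ g' = b) :
    C.eval α g = C.eval α a * C.eval α b := by
  have hfilter : Finset.univ.filter (fun g' => C.child g g' = true) = {a, b} := by
    ext g'; simp [hchild]
  rw [eval_times C α g h, ← Finset.prod_filter, hfilter, Finset.prod_pair hab]

end Eval

structure Emb (C C' : Circuit K) where
  e : C.Gate → C'.Gate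
  inj : Function.Injective e
  kind_eq : ∀ g, C'.kind (e g) = C.kind g
  child_iff : ∀ g g', C'.child (e g) g' = true ↔ ∃ g₂, g' = e g₂ ∧ C.child g g₂ = true
  weight_eq : ∀ g g₂, C'.weight (e g) (e g₂) = C.weight g g₂

namespace Emb

variable {C C' : Circuit K} (E : Emb C C')

theorem child_e_iff (g g₂ : C.Gate) : C'.child (E.e g) (E.e g₂) = true ↔ C.child g g₂ = true := by
  rw [E.child_iff]
  exact ⟨fun ⟨_, he, hc⟩ => E.inj he ▸ hc, fun hc => ⟨g₂, rfl, hc⟩⟩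

theorem child_iff_or {g a b : C.Gate} (h : ∀ g', C.child g g' = true ↔ g' = a ∨ g' = b)
    (g' : C'.Gate) : C'.child (E.e g) g' = true ↔ g' = E.e a ∨ g' = E.e b := by
  simp only [E.child_iff, h]
  aesop

theorem eval_eq [CommSemiring K] (α : ℕ → Bool) (g : C.Gate) :
    C'.eval α (E.e g) = C.eval α g := by
  have hout : ∀ g' ∉ Set.range E.e, C'.child (E.e g) g' = false := fun g' hg' => by
    by_contra hc
    obtain ⟨g₂, rfl, -⟩ := (E.child_iff g g').1 (Bool.not_eq_false _ ▸ hc)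
    exact hg' ⟨g₂, rfl⟩
  match hk : C.kind g with
  | .input x b => rw [C.eval_input α g hk, C'.eval_input α _ ((E.kind_eq g).trans hk)]
  | .plus =>
    rw [C.eval_plus α g hk, C'.eval_plus α _ ((E.kind_eq g).trans hk)]
    refine (Fintype.sum_of_injective E.e E.inj _ _ (fun g' hg' => by simp [hout g' hg'])
      fun g₂ => ?_).symm
    by_cases hc : C.child g g₂ = true
    · rw [if_pos hc, if_pos ((E.child_e_iff g g₂).2 hc), E.weight_eq, eval_eq α g₂]
    · rw [if_neg hc, if_neg (mt (E.child_e_iff g g₂).1 hc)]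
  | .times =>
    rw [C.eval_times α g hk, C'.eval_times α _ ((E.kind_eq g).trans hk)]
    refine (Fintype.prod_of_injective E.e E.inj _ _ (fun g' hg' => by simp [hout g' hg'])
      fun g₂ => ?_).symm
    by_cases hc : C.child g g₂ = true
    · rw [if_pos hc, if_pos ((E.child_e_iff g g₂).2 hc), eval_eq α g₂]
    · rw [if_neg hc, if_neg (mt (E.child_e_iff g g₂).1 hc)]
termination_by C.rank g
decreasing_by all_goals exact C.child_rank g g₂ hc

theorem reaches {g : C.Gate} {g' : C'.Gate} (h : C'.Reaches (E.e g) g') :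
    ∃ g₂, g' = E.e g₂ ∧ C.Reaches g g₂ := by
  induction h with
  | refl => exact ⟨g, rfl, .refl⟩
  | tail _ hc ih =>
    obtain ⟨g₂, rfl, hg₂⟩ := ih
    obtain ⟨g₃, rfl, hc₃⟩ := (E.child_iff g₂ _).1 hc
    exact ⟨g₃, rfl, hg₂.tail hc₃⟩

theorem varsBelow_subset (g : C.Gate) : C'.varsBelow (E.e g) ⊆ C.varsBelow g := by
  rintro x ⟨g', b, hr, hk⟩
  obtain ⟨g₂, rfl, hr₂⟩ := E.reaches hr
  exact ⟨g₂, b, hr₂, (E.kind_eq g₂).symm.trans hk⟩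

theorem mul_eval_eq_zero [CommSemiring K] (hC : C.Deterministic) {g : C.Gate}
    (hk : C.kind g = .plus) {g₁ g₂ : C'.Gate} (hc₁ : C'.child (E.e g) g₁ = true)
    (hc₂ : C'.child (E.e g) g₂ = true) (hne : g₁ ≠ g₂) (α : ℕ → Bool) :
    (C'.weight (E.e g) g₁ * C'.eval α g₁) * (C'.weight (E.e g) g₂ * C'.eval α g₂) = 0 := by
  obtain ⟨h₁, rfl, hh₁⟩ := (E.child_iff g g₁).1 hc₁
  obtain ⟨h₂, rfl, hh₂⟩ := (E.child_iff g g₂).1 hc₂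
  rw [E.weight_eq, E.weight_eq, E.eval_eq, E.eval_eq]
  exact hC g h₁ h₂ hk hh₁ hh₂ (ne_of_apply_ne E.e hne) α

end Emb

namespace StructuredBy

variable {C : Circuit K} {T : VTree}

theorem mem_vars_of_kind_eq_input (S : C.StructuredBy T) {g : C.Gate} {x : ℕ} {b : Bool}
    (h : C.kind g = .input x b) : x ∈ T.vars :=
  (S.φ_subtree g).vars_subset (S.φ_vars g ⟨g, b, .refl, h⟩)

def Realizes [CommSemiring K] (S : C.StructuredBy T) {d : ℕ} (u : TTN K d) : Prop :=
  ∃ gs : Fin d → C.Gate, Function.Injective gs ∧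
    (∀ k, C.kind (gs k) = GateKind.plus ∧ S.φ (gs k) = u.shape) ∧
    (∀ g, C.kind g = GateKind.plus → S.φ g = u.shape → ∃ k, g = gs k) ∧
    (∀ (k : Fin d) (α : ℕ → Bool), C.eval α (gs k) = u.eval α k)

end StructuredBy

end Circuit

section LeafCircuit

variable {K : Type} [CommSemiring K] {d : ℕ}

-- Reducible, so that `simp` sees its gates as elements of a sum type.
@[reducible] def leafCircuit (x : ℕ) (A : Bool → Fin d → K) : Circuit K where
  Gate := Fin d ⊕ Bool
  kind
    | .inl _ => .plus
    | .inr b => .input x b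
  child
    | .inl _, .inr _ => true
    | _, _ => false
  weight
    | .inl k, .inr b => A b k
    | _, _ => 0
  rank
    | .inl _ => 1
    | .inr _ => 0
  child_rank := by rintro (_ | _) (_ | _) h <;> simp_all
  input_no_child := by rintro (_ | _) _ _ h (_ | _) <;> simp_all

variable (x : ℕ) (A : Bool → Fin d → K)

theorem leafCircuit_eval_inr (α : ℕ → Bool) (b : Bool) :
    (leafCircuit x A).eval α (.inr b) = if α x = b then 1 else 0 :=
  Circuit.eval_input _ α _ rfl

theorem leafCircuit_eval_inl (k : Fin d) (α : ℕ → Bool) :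
    (leafCircuit x A).eval α (.inl k) = A (α x) k := by
  rw [Circuit.eval_plus_of_child_iff (leafCircuit x A) α (.inl k) rfl Sum.inr_injective
    (by rintro (_ | _) <;> simp)]
  simp only [Fintype.sum_bool, leafCircuit_eval_inr]
  cases α x <;> simp

theorem leafCircuit_deterministic : (leafCircuit x A).Deterministic := by
  rintro (k | _) (_ | b₁) (_ | b₂) hk hc₁ hc₂ hne α <;>
    simp only [reduceCtorEq, Bool.false_eq_true] at hk hc₁ hc₂
  rw [leafCircuit_eval_inr, leafCircuit_eval_inr]
  cases b₁ <;> cases b₂ <;> cases α x <;> simp_all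

def leafStructuring : (leafCircuit x A).StructuredBy (.leaf x) where
  φ _ := .leaf x
  φ_subtree _ := rfl
  φ_vars := by
    rintro _ y ⟨_ | _, _, -, hk⟩
    · cases hk
    · cases hk; rfl
  plus_structured _ _ _ _ := rfl
  times_structured := by rintro (_ | _) hk <;> cases hk

theorem leafStructuring_realizes : (leafStructuring x A).Realizes (.leaf x A) := by
  refine ⟨Sum.inl, Sum.inl_injective, fun _ => ⟨rfl, rfl⟩, ?_, leafCircuit_eval_inl x A⟩
  rintro (k | _) hk -
  · exact ⟨k, rfl⟩
  · cases hk

end LeafCircuit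

section NodeCircuit

variable {K : Type} [CommSemiring K] {dl dr d : ℕ}

@[reducible] def nodeCircuit (Cl Cr : Circuit K) (gl : Fin dl → Cl.Gate) (gr : Fin dr → Cr.Gate)
    (A : Fin dl → Fin dr → Fin d → K) : Circuit K where
  Gate := (Cl.Gate ⊕ Cr.Gate) ⊕ ((Fin dl × Fin dr) ⊕ Fin d)
  kind
    | .inl (.inl g) => Cl.kind g
    | .inl (.inr g) => Cr.kind g
    | .inr (.inl _) => .times
    | .inr (.inr _) => .plus
  child
    | .inl (.inl g), .inl (.inl g') => Cl.child g g'
    | .inl (.inr g), .inl (.inr g') => Cr.child g g'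
    | .inr (.inl p), .inl (.inl g') => decide (g' = gl p.1)
    | .inr (.inl p), .inl (.inr g') => decide (g' = gr p.2)
    | .inr (.inr _), .inr (.inl _) => true
    | _, _ => false
  weight
    | .inl (.inl g), .inl (.inl g') => Cl.weight g g'
    | .inl (.inr g), .inl (.inr g') => Cr.weight g g'
    | .inr (.inr k), .inr (.inl p) => A p.1 p.2 k
    | _, _ => 0
  rank
    | .inl (.inl g) => Cl.rank g
    | .inl (.inr g) => Cr.rank g
    | .inr (.inl _) => max (Finset.univ.sup Cl.rank) (Finset.univ.sup Cr.rank) + 1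
    | .inr (.inr _) => max (Finset.univ.sup Cl.rank) (Finset.univ.sup Cr.rank) + 2
  child_rank := by
    rintro ((g | g) | (p | k)) ((g' | g') | (p' | k')) h <;> dsimp only at h ⊢ <;>
      (try simp only [decide_eq_true_eq, Bool.false_eq_true] at h)
    · exact Cl.child_rank g g' h
    · exact Cr.child_rank g g' h
    · exact h ▸ Nat.lt_succ_of_le (le_max_of_le_left (Finset.le_sup (Finset.mem_univ _)))
    · exact h ▸ Nat.lt_succ_of_le (le_max_of_le_right (Finset.le_sup (Finset.mem_univ _)))
    · omega
  input_no_child := by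
    rintro ((g | g) | (p | k)) x b hk ((g' | g') | (p' | k')) <;>
      simp only [reduceCtorEq] at hk <;>
      first | rfl | exact Circuit.input_no_child _ g x b hk _

variable (Cl Cr : Circuit K) (gl : Fin dl → Cl.Gate) (gr : Fin dr → Cr.Gate)
  (A : Fin dl → Fin dr → Fin d → K)

def nodeEmbLeft : Circuit.Emb Cl (nodeCircuit Cl Cr gl gr A) where
  e g := .inl (.inl g)
  inj _ _ h := Sum.inl_injective (Sum.inl_injective h)
  kind_eq _ := rfl
  child_iff _ g' := by rcases g' with ((_ | _) | (_ | _)) <;> simp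
  weight_eq _ _ := rfl

def nodeEmbRight : Circuit.Emb Cr (nodeCircuit Cl Cr gl gr A) where
  e g := .inl (.inr g)
  inj _ _ h := Sum.inr_injective (Sum.inl_injective h)
  kind_eq _ := rfl
  child_iff _ g' := by rcases g' with ((_ | _) | (_ | _)) <;> simp
  weight_eq _ _ := rfl

theorem nodeCircuit_child_times (i : Fin dl) (j : Fin dr)
    (g' : (nodeCircuit Cl Cr gl gr A).Gate) :
    (nodeCircuit Cl Cr gl gr A).child (.inr (.inl (i, j))) g' = true ↔
      g' = .inl (.inl (gl i)) ∨ g' = .inl (.inr (gr j)) := by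
  rcases g' with ((_ | _) | (_ | _)) <;> simp

theorem nodeCircuit_child_plus (k : Fin d) (g' : (nodeCircuit Cl Cr gl gr A).Gate) :
    (nodeCircuit Cl Cr gl gr A).child (.inr (.inr k)) g' = true ↔
      g' ∈ Set.range (Sum.inr ∘ Sum.inl) := by
  rcases g' with ((_ | _) | (_ | _)) <;> simp

theorem nodeCircuit_eval_times (α : ℕ → Bool) (i : Fin dl) (j : Fin dr) :
    (nodeCircuit Cl Cr gl gr A).eval α (.inr (.inl (i, j))) =
      Cl.eval α (gl i) * Cr.eval α (gr j) := by
  rw [Circuit.eval_times_of_child_iff _ α _ rfl (by simp)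
    (nodeCircuit_child_times Cl Cr gl gr A i j)]
  exact congr_arg₂ (· * ·) ((nodeEmbLeft Cl Cr gl gr A).eval_eq α (gl i))
    ((nodeEmbRight Cl Cr gl gr A).eval_eq α (gr j))

theorem nodeCircuit_eval_plus (α : ℕ → Bool) (k : Fin d) :
    (nodeCircuit Cl Cr gl gr A).eval α (.inr (.inr k)) =
      ∑ i, ∑ j, A i j k * (Cl.eval α (gl i) * Cr.eval α (gr j)) := by
  rw [Circuit.eval_plus_of_child_iff _ α _ rfl (Sum.inr_injective.comp Sum.inl_injective)
    (nodeCircuit_child_plus Cl Cr gl gr A k), Fintype.sum_prod_type]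
  simp only [Function.comp_apply, nodeCircuit_eval_times]

variable {Cl Cr gl gr A}

theorem nodeCircuit_deterministic (hl : Cl.Deterministic) (hr : Cr.Deterministic)
    (hA : ∀ k i₁ i₂ j₁ j₂, (i₁, j₁) ≠ (i₂, j₂) → A i₁ j₁ k ≠ 0 → A i₂ j₂ k ≠ 0 →
      (∀ α, Cl.eval α (gl i₁) * Cl.eval α (gl i₂) = 0) ∨
        (∀ α, Cr.eval α (gr j₁) * Cr.eval α (gr j₂) = 0)) :
    (nodeCircuit Cl Cr gl gr A).Deterministic := by
  rintro ((g | g) | (_ | k)) g₁ g₂ hk hc₁ hc₂ hne α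
  · exact (nodeEmbLeft Cl Cr gl gr A).mul_eval_eq_zero hl hk hc₁ hc₂ hne α
  · exact (nodeEmbRight Cl Cr gl gr A).mul_eval_eq_zero hr hk hc₁ hc₂ hne α
  · cases hk
  obtain ⟨⟨i₁, j₁⟩, rfl⟩ := (nodeCircuit_child_plus Cl Cr gl gr A k g₁).1 hc₁
  obtain ⟨⟨i₂, j₂⟩, rfl⟩ := (nodeCircuit_child_plus Cl Cr gl gr A k g₂).1 hc₂
  have hij : (i₁, j₁) ≠ (i₂, j₂) := fun h => hne (h ▸ rfl)
  show (A i₁ j₁ k * _) * (A i₂ j₂ k * _) = 0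
  simp only [Function.comp_apply, nodeCircuit_eval_times]
  by_cases h₁ : A i₁ j₁ k = 0
  · simp [h₁]
  by_cases h₂ : A i₂ j₂ k = 0
  · simp [h₂]
  calc _ = (A i₁ j₁ k * A i₂ j₂ k) * ((Cl.eval α (gl i₁) * Cl.eval α (gl i₂)) *
        (Cr.eval α (gr j₁) * Cr.eval α (gr j₂))) := by ring
    _ = 0 := by rcases hA k i₁ i₂ j₁ j₂ hij h₁ h₂ with h | h <;> simp [h α]

namespace Circuit.StructuredBy

variable {Tl Tr : VTree}

def node (Sl : Cl.StructuredBy Tl) (Sr : Cr.StructuredBy Tr) (gl : Fin dl → Cl.Gate)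
    (gr : Fin dr → Cr.Gate) (A : Fin dl → Fin dr → Fin d → K) :
    (nodeCircuit Cl Cr gl gr A).StructuredBy (.node Tl Tr) where
  φ
    | .inl (.inl g) => Sl.φ g
    | .inl (.inr g) => Sr.φ g
    | .inr _ => .node Tl Tr
  φ_subtree
    | .inl (.inl g) => Or.inr (Or.inl (Sl.φ_subtree g))
    | .inl (.inr g) => Or.inr (Or.inr (Sr.φ_subtree g))
    | .inr _ => VTree.Subtree.refl _
  φ_vars := by
    rintro ((g | g) | _)
    · exact ((nodeEmbLeft Cl Cr gl gr A).varsBelow_subset g).trans (Sl.φ_vars g)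
    · exact ((nodeEmbRight Cl Cr gl gr A).varsBelow_subset g).trans (Sr.φ_vars g)
    · rintro y ⟨(g' | g') | (_ | _), b, -, hk⟩
      · exact Or.inl (Sl.mem_vars_of_kind_eq_input hk)
      · exact Or.inr (Sr.mem_vars_of_kind_eq_input hk)
      all_goals cases hk
  plus_structured := by
    rintro ((g | g) | (_ | k)) g' hk hc
    · obtain ⟨g₂, rfl, hc₂⟩ := ((nodeEmbLeft Cl Cr gl gr A).child_iff g g').1 hc
      exact Sl.plus_structured g g₂ hk hc₂
    · obtain ⟨g₂, rfl, hc₂⟩ := ((nodeEmbRight Cl Cr gl gr A).child_iff g g').1 hc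
      exact Sr.plus_structured g g₂ hk hc₂
    · cases hk
    · obtain ⟨_, rfl⟩ := (nodeCircuit_child_plus Cl Cr gl gr A k g').1 hc
      exact VTree.Subtree.refl _
  times_structured := by
    rintro ((g | g) | (⟨i, j⟩ | _)) hk
    · obtain ⟨L, R, gL, gR, hφ, hne, hchild, hL, hR⟩ := Sl.times_structured g hk
      exact ⟨L, R, _, _, hφ, (nodeEmbLeft Cl Cr gl gr A).inj.ne hne,
        (nodeEmbLeft Cl Cr gl gr A).child_iff_or hchild, hL, hR⟩
    · obtain ⟨L, R, gL, gR, hφ, hne, hchild, hL, hR⟩ := Sr.times_structured g hk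
      exact ⟨L, R, _, _, hφ, (nodeEmbRight Cl Cr gl gr A).inj.ne hne,
        (nodeEmbRight Cl Cr gl gr A).child_iff_or hchild, hL, hR⟩
    · exact ⟨Tl, Tr, _, _, rfl, by simp, nodeCircuit_child_times Cl Cr gl gr A i j,
        Sl.φ_subtree _, Sr.φ_subtree _⟩
    · cases hk

theorem realizes_node {l : TTN K dl} {r : TTN K dr} (Sl : Cl.StructuredBy l.shape)
    (Sr : Cr.StructuredBy r.shape) (hl : ∀ k α, Cl.eval α (gl k) = l.eval α k)
    (hr : ∀ k α, Cr.eval α (gr k) = r.eval α k) :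
    (Sl.node Sr gl gr A).Realizes (.node l r A) := by
  refine ⟨fun k => .inr (.inr k), fun _ _ h => Sum.inr_injective (Sum.inr_injective h),
    fun _ => ⟨rfl, rfl⟩, ?_, fun k α => ?_⟩
  · rintro ((g | g) | (_ | k)) hk hφ
    · exact absurd (hφ ▸ Sl.φ_subtree g) (VTree.not_node_subtree_left _ _)
    · exact absurd (hφ ▸ Sr.φ_subtree g) (VTree.not_node_subtree_right _ _)
    · cases hk
    · exact ⟨k, rfl⟩
  · simp only [nodeCircuit_eval_plus, hl, hr]
    rfl

variable {d' : ℕ} {u : TTN K d'}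

theorem Realizes.node_left {Sl : Cl.StructuredBy Tl} (Sr : Cr.StructuredBy Tr)
    (h : Sl.Realizes u) (hu : u.shape.Subtree Tl) (hdisj : Tl.leaves.Disjoint Tr.leaves) :
    (Sl.node Sr gl gr A).Realizes u := by
  obtain ⟨gs, hinj, hplus, hall, heval⟩ := h
  refine ⟨fun k => .inl (.inl (gs k)), (nodeEmbLeft Cl Cr gl gr A).inj.comp hinj, hplus, ?_,
    fun k α => ((nodeEmbLeft Cl Cr gl gr A).eval_eq α (gs k)).trans (heval k α)⟩
  rintro ((g | g) | (_ | _)) hk hφ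
  · obtain ⟨k, rfl⟩ := hall g hk hφ
    exact ⟨k, rfl⟩
  · exact absurd hdisj (hu.not_disjoint_leaves (hφ ▸ Sr.φ_subtree g))
  · cases hk
  · exact absurd (hφ ▸ hu) (VTree.not_node_subtree_left _ _)

theorem Realizes.node_right (Sl : Cl.StructuredBy Tl) {Sr : Cr.StructuredBy Tr}
    (h : Sr.Realizes u) (hu : u.shape.Subtree Tr) (hdisj : Tl.leaves.Disjoint Tr.leaves) :
    (Sl.node Sr gl gr A).Realizes u := by
  obtain ⟨gs, hinj, hplus, hall, heval⟩ := h
  refine ⟨fun k => .inl (.inr (gs k)), (nodeEmbRight Cl Cr gl gr A).inj.comp hinj, hplus, ?_,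
    fun k α => ((nodeEmbRight Cl Cr gl gr A).eval_eq α (gs k)).trans (heval k α)⟩
  rintro ((g | g) | (_ | _)) hk hφ
  · exact absurd hdisj ((hφ ▸ Sl.φ_subtree g).not_disjoint_leaves hu)
  · obtain ⟨k, rfl⟩ := hall g hk hφ
    exact ⟨k, rfl⟩
  · cases hk
  · exact absurd (hφ ▸ hu) (VTree.not_node_subtree_right _ _)

end Circuit.StructuredBy

end NodeCircuit

theorem TTN.exists_deterministic_structuredBy_realizes {K : Type} [CommSemiring K] {d : ℕ}
    (t : TTN K d) (hnodup : t.shape.leaves.Nodup) (hdet : t.Deterministic) :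
    ∃ (C : Circuit K) (S : C.StructuredBy t.shape), C.Deterministic ∧
      ∀ (d' : ℕ) (u : TTN K d'), u.Sub t → S.Realizes u := by
  induction t with
  | leaf x A =>
    refine ⟨leafCircuit x A, leafStructuring x A, leafCircuit_deterministic x A, ?_⟩
    rintro d' u ⟨⟩
    exact leafStructuring_realizes x A
  | node l r A ihl ihr =>
    obtain ⟨hnodup_l, hnodup_r, hdisj⟩ := List.nodup_append'.1 hnodup
    obtain ⟨hdet_l, hdet_r, hA⟩ := hdet
    obtain ⟨Cl, Sl, hCl, hSl⟩ := ihl hnodup_l hdet_l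
    obtain ⟨Cr, Sr, hCr, hSr⟩ := ihr hnodup_r hdet_r
    obtain ⟨gl, -, -, -, hgl⟩ := hSl _ l (.refl l)
    obtain ⟨gr, -, -, -, hgr⟩ := hSr _ r (.refl r)
    refine ⟨_, Sl.node Sr gl gr A, nodeCircuit_deterministic hCl hCr ?_, ?_⟩
    · simpa only [hgl, hgr] using hA
    rintro d' u (_ | ⟨_, _, _, _, hsub⟩ | ⟨_, _, _, _, hsub⟩)
    · exact Sl.realizes_node Sr hgl hgr
    · exact (hSl _ u hsub).node_left Sr hsub.shape_subtree hdisj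
    · exact (hSr _ u hsub).node_right Sl hsub.shape_subtree hdisj

/-- from a deterministic TTN to a deterministic structured-decomposable
circuit, with exactly `d(v)` `+` gates per vtree node computing the functions
`Â(v)[·,k]`. -/
theorem deterministic_ttn_to_circuit {K : Type} [CommSemiring K] {s : ℕ} (t : TTN K s)
    (hnodup : t.shape.leaves.Nodup) (hdet : t.Deterministic) :
    ∃ (C : Circuit K) (S : C.StructuredBy t.shape) (out : Fin s → C.Gate),
      C.Deterministic ∧
      (∀ (k : Fin s) (α : ℕ → Bool), C.eval α (out k) = t.eval α k) ∧
      (∀ (d' : ℕ) (u : TTN K d'), TTN.Sub u t →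
        ∃ gs : Fin d' → C.Gate, Function.Injective gs ∧
          (∀ k, C.kind (gs k) = GateKind.plus ∧ S.φ (gs k) = u.shape) ∧
          (∀ g, C.kind g = GateKind.plus → S.φ g = u.shape → ∃ k, g = gs k) ∧
          (∀ (k : Fin d') (α : ℕ → Bool), C.eval α (gs k) = u.eval α k)) := by
  obtain ⟨C, S, hC, hS⟩ := t.exists_deterministic_structuredBy_realizes hnodup hdet
  obtain ⟨out, -, -, -, hout⟩ := hS s t (.refl t)
  exact ⟨C, S, out, hC, hout, hS⟩
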